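/- For the exponentially weighted bivariate Hermite coefficient estimators Â_{uv}^{(n)} updated by Â^{(1)} = h_u(x_1)h_v(y_1), Â^{(i)} = (1-λ)Â^{(i-1)} + λh_u(x_i)h_v(y_i), based on i.i.d. observations, the covariance Cov(â_{(1),r}^{(n)}, Â_{uv}^{(n)}) converges to (λ/(2-λ))·Cov(h_r(X), h_u(X)h_v(Y)) as n → ∞, where â_{(1),r}^{(n)} is the analogously updated univariate coefficient based on h_r(x_i). -/

import Mathlib

open MeasureTheory ProbabilityTheory Filter

/-- Physicists' Hermite polynomials, via the recurrence
`H_{k+1}(x) = 2x H_k(x) - 2k H_{k-1}(x)`. -/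
noncomputable def physHermite : ℕ → ℝ → ℝ
  | 0 => fun _ => 1
  | 1 => fun x => 2 * x
  | n + 2 => fun x => 2 * x * physHermite (n + 1) x - 2 * (n + 1 : ℕ) * physHermite n x

/-- Normalized Hermite functions `h_k(x) = (2^k k! √π)^{-1/2} e^{-x²/2} H_k(x)`. -/
noncomputable def hermiteFun (k : ℕ) (x : ℝ) : ℝ :=
  ((2 : ℝ) ^ k * (Nat.factorial k : ℝ) * Real.sqrt Real.pi) ^ (-(1 : ℝ) / 2) *
    Real.exp (-x ^ 2 / 2) * physHermite k x

/-- Exponentially weighted univariate Hermite coefficient estimator: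
`â^{(1)} = h_r(x₁)`, `â^{(i)} = (1-λ)â^{(i-1)} + λ h_r(xᵢ)`. -/
noncomputable def ewCoeff1 {Ω : Type*} (l : ℝ) (X : ℕ → Ω → ℝ) (r : ℕ) : ℕ → Ω → ℝ
  | 0 => fun ω => hermiteFun r (X 0 ω)
  | n + 1 => fun ω => (1 - l) * ewCoeff1 l X r n ω + l * hermiteFun r (X (n + 1) ω)

/-- Exponentially weighted bivariate Hermite coefficient estimator:
`Â^{(1)} = h_u(x₁)h_v(y₁)`, `Â^{(i)} = (1-λ)Â^{(i-1)} + λ h_u(xᵢ)h_v(yᵢ)`. -/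
noncomputable def ewCoeff2 {Ω : Type*} (l : ℝ) (X Y : ℕ → Ω → ℝ) (u v : ℕ) : ℕ → Ω → ℝ
  | 0 => fun ω => hermiteFun u (X 0 ω) * hermiteFun v (Y 0 ω)
  | n + 1 => fun ω =>
      (1 - l) * ewCoeff2 l X Y u v n ω + l * hermiteFun u (X (n + 1) ω) * hermiteFun v (Y (n + 1) ω)

/-- Covariance of two real random variables. -/
noncomputable def cov {Ω : Type*} [MeasurableSpace Ω] (μ : Measure Ω) (f g : Ω → ℝ) : ℝ :=
  ∫ ω, (f ω - ∫ ω', f ω' ∂μ) * (g ω - ∫ ω', g ω' ∂μ) ∂μ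


/-!
Unrolling the recursions, both estimators are weighted sums `∑ᵢ wₙᵢ ξᵢ` of the i.i.d. summands
`ξᵢ = h_r(xᵢ)` resp. `h_u(xᵢ)h_v(yᵢ)` with the same weights `wₙ₀ = (1-λ)ⁿ`, `wₙᵢ = λ(1-λ)ⁿ⁻ⁱ`.
By bilinearity and independence only the diagonal terms survive, so the covariance is
`(∑ᵢ wₙᵢ²) · Cov(h_r(X), h_u(X)h_v(Y))`; the Hermite functions are bounded, so every covariance is
finite. Finally `∑ᵢ wₙᵢ² = λ/(2-λ) + (1-λ)²ⁿ (1 - λ/(2-λ)) → λ/(2-λ)`.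
-/
open Finset

@[fun_prop]
lemma physHermite_continuous (k : ℕ) : Continuous (physHermite k) := by
  induction k using physHermite.induct with
  | case1 => exact continuous_const
  | case2 => exact continuous_const.mul continuous_id
  | case3 n ih₁ ih₀ =>
    exact ((continuous_const.mul continuous_id).mul ih₁).sub (continuous_const.mul ih₀)

lemma abs_physHermite_le (k : ℕ) :
    ∃ C, 0 ≤ C ∧ ∀ x, |physHermite k x| ≤ C * (1 + |x|) ^ k := by
  induction k using physHermite.induct with
  | case1 => exact ⟨1, zero_le_one, fun x => by simp [physHermite]⟩
  | case2 => exact ⟨2, zero_le_two, fun x => by simp [physHermite, abs_mul]⟩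
  | case3 n ih₁ ih₀ =>
    obtain ⟨C₁, hC₁, h₁⟩ := ih₁
    obtain ⟨C₀, hC₀, h₀⟩ := ih₀
    refine ⟨2 * C₁ + 2 * (n + 1) * C₀, by positivity, fun x => ?_⟩
    have hx : 1 ≤ 1 + |x| := le_add_of_nonneg_right (abs_nonneg x)
    have hpow : (1 + |x|) ^ n ≤ (1 + |x|) ^ (n + 2) := pow_le_pow_right₀ hx (by omega)
    have hfirst : |2 * x * physHermite (n + 1) x| ≤ 2 * C₁ * (1 + |x|) ^ (n + 2) := by
      rw [abs_mul, abs_mul, abs_two, pow_succ' _ (n + 1)]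
      nlinarith [h₁ x, abs_nonneg (physHermite (n + 1) x), abs_nonneg x]
    have hsecond : |2 * ((n + 1 : ℕ) : ℝ) * physHermite n x| ≤
        2 * (n + 1) * C₀ * (1 + |x|) ^ (n + 2) := by
      rw [abs_mul, abs_of_nonneg (by positivity), mul_assoc _ C₀]
      push_cast
      gcongr
      exact (h₀ x).trans (mul_le_mul_of_nonneg_left hpow hC₀)
    calc |physHermite (n + 2) x|
        ≤ |2 * x * physHermite (n + 1) x| + |2 * ((n + 1 : ℕ) : ℝ) * physHermite n x| :=
          abs_sub _ _
      _ ≤ (2 * C₁ + 2 * (n + 1) * C₀) * (1 + |x|) ^ (n + 2) := by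
          rw [add_mul]; exact add_le_add hfirst hsecond

lemma exp_neg_sq_div_two_mul_one_add_abs_pow_le (k : ℕ) (x : ℝ) :
    Real.exp (-x ^ 2 / 2) * (1 + |x|) ^ k ≤ k.factorial * Real.exp 2 := by
  have hpow : (1 + |x|) ^ k ≤ k.factorial * Real.exp (1 + |x|) := by
    have := Real.pow_div_factorial_le_exp (1 + |x|) (by positivity) k
    rwa [div_le_iff₀ (by positivity), mul_comm] at this
  have hexp : Real.exp (-x ^ 2 / 2) * Real.exp (1 + |x|) ≤ Real.exp 2 := by
    rw [← Real.exp_add, Real.exp_le_exp]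
    nlinarith [sq_nonneg (|x| - 1), sq_abs x]
  calc Real.exp (-x ^ 2 / 2) * (1 + |x|) ^ k
      ≤ Real.exp (-x ^ 2 / 2) * (k.factorial * Real.exp (1 + |x|)) := by gcongr
    _ = k.factorial * (Real.exp (-x ^ 2 / 2) * Real.exp (1 + |x|)) := by ring
    _ ≤ k.factorial * Real.exp 2 := by gcongr

@[fun_prop]
lemma hermiteFun_continuous (k : ℕ) : Continuous (hermiteFun k) := by
  unfold hermiteFun
  fun_prop

lemma abs_hermiteFun_le (k : ℕ) : ∃ C, ∀ x, |hermiteFun k x| ≤ C := by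
  obtain ⟨C, hC, hH⟩ := abs_physHermite_le k
  set c := ((2 : ℝ) ^ k * (Nat.factorial k : ℝ) * Real.sqrt Real.pi) ^ (-(1 : ℝ) / 2)
  refine ⟨|c| * (C * (k.factorial * Real.exp 2)), fun x => ?_⟩
  calc |hermiteFun k x| = |c| * (Real.exp (-x ^ 2 / 2) * |physHermite k x|) := by
        rw [hermiteFun, abs_mul, abs_mul, abs_of_pos (Real.exp_pos _), mul_assoc]
    _ ≤ |c| * (C * (Real.exp (-x ^ 2 / 2) * (1 + |x|) ^ k)) := by
        refine mul_le_mul_of_nonneg_left ?_ (abs_nonneg c)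
        rw [mul_left_comm]
        exact mul_le_mul_of_nonneg_left (hH x) (Real.exp_pos _).le
    _ ≤ |c| * (C * (k.factorial * Real.exp 2)) := by
        grw [exp_neg_sq_div_two_mul_one_add_abs_pow_le k x]

/-- The weight `wₙᵢ` of observation `i` after the observations `0, …, n`; only meaningful for
`i ≤ n`. -/
noncomputable def ewWeight (l : ℝ) (n i : ℕ) : ℝ :=
  if i = 0 then (1 - l) ^ n else l * (1 - l) ^ (n - i)

lemma ewWeight_succ (l : ℝ) {n i : ℕ} (hi : i ≤ n) :
    ewWeight l (n + 1) i = (1 - l) * ewWeight l n i := by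
  unfold ewWeight
  split_ifs
  · rw [pow_succ']
  · rw [Nat.sub_add_comm hi, pow_succ']; ring

lemma ewWeight_self_succ (l : ℝ) (n : ℕ) : ewWeight l (n + 1) (n + 1) = l := by
  simp [ewWeight]

lemma eq_sum_ewWeight {l : ℝ} {e s : ℕ → ℝ} (h0 : e 0 = s 0)
    (hsucc : ∀ n, e (n + 1) = (1 - l) * e n + l * s (n + 1)) (n : ℕ) :
    e n = ∑ i ∈ range (n + 1), ewWeight l n i * s i := by
  induction n with
  | zero => simp [h0, ewWeight]
  | succ n ih =>
    rw [hsucc, ih, sum_range_succ _ (n + 1), ewWeight_self_succ, mul_sum]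
    congr 1
    refine sum_congr rfl fun i hi => ?_
    rw [ewWeight_succ l (mem_range_succ_iff.1 hi), mul_assoc]

lemma ewCoeff1_eq_sum {Ω : Type*} (l : ℝ) (X : ℕ → Ω → ℝ) (r n : ℕ) :
    ewCoeff1 l X r n = fun ω => ∑ i ∈ range (n + 1), ewWeight l n i * hermiteFun r (X i ω) :=
  funext fun ω => eq_sum_ewWeight (e := fun n => ewCoeff1 l X r n ω) rfl (fun _ => rfl) n

lemma ewCoeff2_eq_sum {Ω : Type*} (l : ℝ) (X Y : ℕ → Ω → ℝ) (u v n : ℕ) :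
    ewCoeff2 l X Y u v n = fun ω =>
      ∑ i ∈ range (n + 1), ewWeight l n i * (hermiteFun u (X i ω) * hermiteFun v (Y i ω)) :=
  funext fun ω => eq_sum_ewWeight (e := fun n => ewCoeff2 l X Y u v n ω) rfl
    (fun n => by simp only [ewCoeff2, mul_assoc]) n

lemma sum_ewWeight_sq {l : ℝ} (hl : l ≠ 2) (n : ℕ) :
    ∑ i ∈ range (n + 1), ewWeight l n i ^ 2 =
      l / (2 - l) + ((1 - l) ^ 2) ^ n * (1 - l / (2 - l)) := by
  have h2l : 2 - l ≠ 0 := sub_ne_zero.2 hl.symm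
  induction n with
  | zero => simp [ewWeight]
  | succ n ih =>
    have hscale : ∑ i ∈ range (n + 1), ewWeight l (n + 1) i ^ 2 =
        (1 - l) ^ 2 * ∑ i ∈ range (n + 1), ewWeight l n i ^ 2 := by
      rw [mul_sum]
      exact sum_congr rfl fun i hi => by
        rw [ewWeight_succ l (mem_range_succ_iff.1 hi), mul_pow]
    rw [sum_range_succ, ewWeight_self_succ, hscale, ih]
    field_simp
    ring

lemma tendsto_sum_ewWeight_sq {l : ℝ} (hl0 : 0 < l) (hl2 : l < 2) :
    Tendsto (fun n => ∑ i ∈ range (n + 1), ewWeight l n i ^ 2) atTop (nhds (l / (2 - l))) := by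
  have hgeom : Tendsto (fun n : ℕ => ((1 - l) ^ 2) ^ n) atTop (nhds 0) :=
    tendsto_pow_atTop_nhds_zero_of_lt_one (sq_nonneg _) (by nlinarith)
  simpa [sum_ewWeight_sq hl2.ne] using (hgeom.mul_const (1 - l / (2 - l))).const_add (l / (2 - l))

section Covariance

variable {Ω E : Type*} [MeasurableSpace Ω] [MeasurableSpace E] {μ : Measure Ω}

lemma ProbabilityTheory.IdentDistrib.covariance_comp_eq {Z Z' : Ω → E}
    (h : IdentDistrib Z Z' μ μ) {F G : E → ℝ} (hF : Measurable F) (hG : Measurable G) :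
    cov[fun ω => F (Z ω), fun ω => G (Z ω); μ] = cov[fun ω => F (Z' ω), fun ω => G (Z' ω); μ] := by
  rw [← covariance_map_fun hF.aestronglyMeasurable hG.aestronglyMeasurable h.aemeasurable_fst,
    ← covariance_map_fun hF.aestronglyMeasurable hG.aestronglyMeasurable h.aemeasurable_snd,
    h.map_eq]

lemma covariance_sum_mul_comp_of_iid [IsFiniteMeasure μ] {Z : ℕ → Ω → E}
    (hind : iIndepFun Z μ) (hid : ∀ i, IdentDistrib (Z i) (Z 0) μ μ)
    {F G : E → ℝ} (hF : Measurable F) (hG : Measurable G)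
    (hF2 : MemLp (fun ω => F (Z 0 ω)) 2 μ) (hG2 : MemLp (fun ω => G (Z 0 ω)) 2 μ)
    (a b : ℕ → ℝ) (s : Finset ℕ) :
    cov[fun ω => ∑ i ∈ s, a i * F (Z i ω), fun ω => ∑ i ∈ s, b i * G (Z i ω); μ] =
      (∑ i ∈ s, a i * b i) * cov[fun ω => F (Z 0 ω), fun ω => G (Z 0 ω); μ] := by
  have hFi : ∀ i, MemLp (fun ω => F (Z i ω)) 2 μ := fun i =>
    ((hid i).comp hF).memLp_iff.2 hF2
  have hGi : ∀ i, MemLp (fun ω => G (Z i ω)) 2 μ := fun i =>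
    ((hid i).comp hG).memLp_iff.2 hG2
  have hoff : ∀ i j, i ≠ j → cov[fun ω => F (Z i ω), fun ω => G (Z j ω); μ] = 0 := fun i j hij =>
    ((hind.indepFun hij).comp hF hG).covariance_eq_zero (hFi i) (hGi j)
  rw [covariance_fun_sum_fun_sum' (fun i _ => (hFi i).const_mul (a i))
    (fun j _ => (hGi j).const_mul (b j)), sum_mul]
  refine sum_congr rfl fun i hi => ?_
  rw [sum_eq_single_of_mem i hi fun j _ hji => by
      rw [covariance_const_mul_left, covariance_const_mul_right, hoff i j hji.symm, mul_zero,
        mul_zero],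
    covariance_const_mul_left, covariance_const_mul_right, (hid i).covariance_comp_eq hF hG]
  ring

end Covariance

theorem ew_hermite_coeff_cov_tendsto_general {Ω : Type*} [MeasurableSpace Ω] (μ : Measure Ω)
    [IsProbabilityMeasure μ] (X Y : ℕ → Ω → ℝ)
    (hindep : iIndepFun (fun i ω => (X i ω, Y i ω)) μ)
    (hident : ∀ i, IdentDistrib (fun ω => (X i ω, Y i ω)) (fun ω => (X 0 ω, Y 0 ω)) μ μ)
    (l : ℝ) (hl0 : 0 < l) (hl1 : l < 1) (r u v : ℕ) :
    Tendsto (fun n => cov μ (ewCoeff1 l X r n) (ewCoeff2 l X Y u v n)) atTop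
      (nhds (l / (2 - l) *
        cov μ (fun ω => hermiteFun r (X 0 ω))
          (fun ω => hermiteFun u (X 0 ω) * hermiteFun v (Y 0 ω)))) := by
  obtain ⟨Cr, hCr⟩ := abs_hermiteFun_le r
  obtain ⟨Cu, hCu⟩ := abs_hermiteFun_le u
  obtain ⟨Cv, hCv⟩ := abs_hermiteFun_le v
  have hF : Measurable fun p : ℝ × ℝ => hermiteFun r p.1 := by fun_prop
  have hG : Measurable fun p : ℝ × ℝ => hermiteFun u p.1 * hermiteFun v p.2 := by fun_prop
  have hZ0 := (hident 0).aemeasurable_fst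
  have hF2 : MemLp (fun ω => hermiteFun r (X 0 ω)) 2 μ :=
    .of_bound (hF.comp_aemeasurable hZ0).aestronglyMeasurable Cr (ae_of_all _ fun _ => hCr _)
  have hG2 : MemLp (fun ω => hermiteFun u (X 0 ω) * hermiteFun v (Y 0 ω)) 2 μ := by
    refine .of_bound (hG.comp_aemeasurable hZ0).aestronglyMeasurable (Cu * Cv)
      (ae_of_all _ fun _ => ?_)
    rw [Real.norm_eq_abs, abs_mul]
    exact mul_le_mul (hCu _) (hCv _) (abs_nonneg _) ((abs_nonneg _).trans (hCu 0))
  have hcov : ∀ n, cov μ (ewCoeff1 l X r n) (ewCoeff2 l X Y u v n) =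
      (∑ i ∈ range (n + 1), ewWeight l n i ^ 2) * cov μ (fun ω => hermiteFun r (X 0 ω))
        (fun ω => hermiteFun u (X 0 ω) * hermiteFun v (Y 0 ω)) := fun n => by
    simp only [ewCoeff1_eq_sum, ewCoeff2_eq_sum, sq]
    -- `cov μ f g` is definitionally Mathlib's `cov[f, g; μ]`
    exact covariance_sum_mul_comp_of_iid hindep hident hF hG hF2 hG2 _ _ _
  simpa only [hcov] using (tendsto_sum_ewWeight_sq hl0 (by linarith)).mul_const _

/-- for i.i.d. observations from a bivariate density `f`, the covariance of the
exponentially weighted univariate coefficient `â_{(1),r}^{(n)}` and bivariate coefficient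
`Â_{uv}^{(n)}` converges to `(λ/(2-λ))·Cov(h_r(X), h_u(X)h_v(Y))` as `n → ∞`. -/
theorem ew_hermite_coeff_cov_tendsto {Ω : Type*} [MeasurableSpace Ω] (μ : Measure Ω)
    [IsProbabilityMeasure μ] (X Y : ℕ → Ω → ℝ)
    (hX : ∀ i, Measurable (X i)) (hY : ∀ i, Measurable (Y i))
    (f : ℝ → ℝ → ℝ)
    (hindep : iIndepFun (fun i ω => (X i ω, Y i ω)) μ)
    (hident : ∀ i, IdentDistrib (fun ω => (X i ω, Y i ω)) (fun ω => (X 0 ω, Y 0 ω)) μ μ)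
    (hdens : Measure.map (fun ω => (X 0 ω, Y 0 ω)) μ =
      (volume : Measure (ℝ × ℝ)).withDensity (fun p => ENNReal.ofReal (f p.1 p.2)))
    (l : ℝ) (hl0 : 0 < l) (hl1 : l < 1) (r u v : ℕ) :
    Tendsto (fun n => cov μ (ewCoeff1 l X r n) (ewCoeff2 l X Y u v n)) atTop
      (nhds (l / (2 - l) *
        cov μ (fun ω => hermiteFun r (X 0 ω))
          (fun ω => hermiteFun u (X 0 ω) * hermiteFun v (Y 0 ω)))) :=
  ew_hermite_coeff_cov_tendsto_general μ X Y hindep hident l hl0 hl1 r u v
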